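/- arXiv:1812.02742 — 5 statements merged into one kernel-verified Lean document; each statement's English description precedes it below -/
import Mathlib

section
/- For all integers n ≥ 2, the signed bivariate excedance polynomial over S_n satisfies ∑_{π ∈ S_n} (-1)^{inv(π)} t^{exc(π)} s^{nexc(π)-1} = (s - t)^{n-1}. -/
/-!
Expanding the determinant of the matrix with `t` strictly below the diagonal and `s` on and
above it along permutations gives exactly `s` times the signed sum, since `sign π = (-1)^inv(π)`
and the entry in position `(π i, i)` is `t` precisely when `i` is an excedance of `π`.
Subtracting each column from the next one makes the matrix lower triangular with diagonal
`s, s - t, …, s - t`, so the determinant is `s (s - t)^(n-1)`.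
-/

open Finset MvPolynomial

/-- Number of excedances of a permutation of `{0,…,n-1}`. -/
def excA {n : ℕ} (π : Equiv.Perm (Fin n)) : ℕ :=
  (Finset.univ.filter (fun i => i < π i)).card

/-- Number of non-excedances. -/
def nexcA {n : ℕ} (π : Equiv.Perm (Fin n)) : ℕ := n - excA π

/-- Number of inversions. -/
def invA {n : ℕ} (π : Equiv.Perm (Fin n)) : ℕ :=
  (Finset.univ.filter (fun p : Fin n × Fin n => p.1 < p.2 ∧ π p.2 < π p.1)).card

theorem Equiv.Perm.sign_eq_neg_one_pow_invA {n : ℕ} (σ : Equiv.Perm (Fin n)) :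
    Equiv.Perm.sign σ = (-1) ^ invA σ := by
  have hpair : ∀ i j : Fin n, (if i < j then (if σ i < σ j then 1 else -1) else 1 : ℤˣ)
      = if i < j ∧ σ j < σ i then -1 else 1 := by
    intro i j
    by_cases hij : i < j
    · rcases (σ.injective.ne hij.ne).lt_or_gt with h | h <;> simp [hij, h, h.not_gt]
    · simp [hij]
  rw [sign_eq_prod_prod_Ioi]
  simp_rw [← filter_lt_eq_Ioi, prod_filter, hpair]
  rw [← Fintype.prod_prod_type'
      (f := fun i j => if i < j ∧ σ j < σ i then (-1 : ℤˣ) else 1),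
    prod_ite, prod_const, prod_const_one, mul_one]
  rfl

theorem Matrix.det_of_ite_lt {R : Type*} [CommRing R] (n : ℕ) (a b : R) :
    (Matrix.of fun i j : Fin (n + 1) => if j < i then b else a).det = a * (a - b) ^ n := by
  set L : Matrix (Fin (n + 1)) (Fin (n + 1)) R := Matrix.of fun i j =>
    Fin.cases (if 0 < i then b else a) (fun k => if i = k.succ then a - b else 0) j
  have hL : L.IsLowerTriangular := by
    intro i j hij
    cases j using Fin.cases with
    | zero => exact absurd hij (Fin.not_lt_zero i)
    | succ k =>
      have hik : i < k.succ := hij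
      simp [L, hik.ne]
  rw [Matrix.det_eq_of_forall_col_eq_smul_add_pred (B := L) (fun _ => 1)]
  · rw [Matrix.det_of_isLowerTriangular L hL, Fin.prod_univ_succ]
    simp [L]
  · intro i
    simp [L]
  · intro i k
    simp only [L, Matrix.of_apply, Fin.cases_succ, one_mul, Fin.castSucc_lt_iff_succ_le]
    rcases lt_trichotomy i k.succ with h | rfl | h
    · simp [h.ne, h.not_gt, h.not_ge]
    · simp
    · simp [h, h.ne', h.le]

theorem prod_ite_lt_apply {M : Type*} [CommMonoid M] {n : ℕ} (σ : Equiv.Perm (Fin n)) (a b : M) :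
    ∏ i, (if i < σ i then b else a) = b ^ excA σ * a ^ nexcA σ := by
  have hsplit := card_filter_add_card_filter_not (s := univ) (fun i => i < σ i)
  rw [card_univ, Fintype.card_fin] at hsplit
  rw [prod_ite, prod_const, prod_const, nexcA, excA]
  congr 2
  omega

theorem nexcA_pos {n : ℕ} (σ : Equiv.Perm (Fin (n + 1))) : 0 < nexcA σ := by
  have hlast : Fin.last n ∉ univ.filter (fun i => i < σ i) := by
    simpa using Fin.le_last (σ (Fin.last n))
  have := card_lt_univ_of_notMem hlast
  rw [Fintype.card_fin] at this
  exact Nat.sub_pos_of_lt this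

theorem sum_sign_mul_pow_excA_mul_pow_nexcA {R : Type*} [CommRing R] (n : ℕ) (a b : R) :
    ∑ σ : Equiv.Perm (Fin (n + 1)), (Equiv.Perm.sign σ : R) * (b ^ excA σ * a ^ nexcA σ)
      = a * (a - b) ^ n := by
  rw [← Matrix.det_of_ite_lt, Matrix.det_apply']
  simp only [Matrix.of_apply, prod_ite_lt_apply]

theorem stmt1_general (n : ℕ) :
    (∑ π : Equiv.Perm (Fin n),
      (MvPolynomial.C ((-1 : ℚ) ^ invA π)) *
        (MvPolynomial.X 1 : MvPolynomial (Fin 2) ℚ) ^ excA π *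
        (MvPolynomial.X 0) ^ (nexcA π - 1))
    = (MvPolynomial.X 0 - MvPolynomial.X 1 : MvPolynomial (Fin 2) ℚ) ^ (n - 1) := by
  cases n with
  | zero => simp [invA, excA, nexcA]
  | succ m =>
    apply mul_left_cancel₀ (X_ne_zero (0 : Fin 2))
    rw [Nat.add_sub_cancel, ← sum_sign_mul_pow_excA_mul_pow_nexcA, mul_sum]
    refine sum_congr rfl fun σ _ => ?_
    rw [Equiv.Perm.sign_eq_neg_one_pow_invA, ← Nat.sub_add_cancel (nexcA_pos σ), pow_succ]
    simp only [Nat.add_sub_cancel, Units.val_pow_eq_pow_val, Units.val_neg, Units.val_one,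
      map_pow, map_neg, map_one]
    push_cast
    ring

theorem stmt1 (n : ℕ) (hn : 2 ≤ n) :
    (∑ π : Equiv.Perm (Fin n),
      (MvPolynomial.C ((-1 : ℚ) ^ invA π)) *
        (MvPolynomial.X 1 : MvPolynomial (Fin 2) ℚ) ^ excA π *
        (MvPolynomial.X 0) ^ (nexcA π - 1))
    = (MvPolynomial.X 0 - MvPolynomial.X 1 : MvPolynomial (Fin 2) ℚ) ^ (n - 1) :=
  stmt1_general n
end

section
/- For all integers n ≥ 2 and 1 ≤ r ≤ n-2, the number of even permutations π ∈ S_n with π⁻¹(n) = r and exc(π) = k equals the number of odd permutations π ∈ S_n with π⁻¹(n) = r and exc(π) = k; each equals half the number of all permutations in S_n with π⁻¹(n) = r and exc(π) = k. -/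
/-!
Right multiplication by the transposition of the last two positions, `n - 1` and `n`, is a
parity-reversing involution. When the letter `n` sits at a position `r ≤ n - 2`, neither of the
last two positions is an excedance before or after the swap, and the position of `n` is untouched,
so the involution pairs even and odd permutations with the same `r` and the same `k`.
-/

open Finset

/-- One-line notation of `π` extended to `ℕ`. -/
def onel {n : ℕ} (π : Equiv.Perm (Fin n)) (i : ℕ) : ℕ :=
  if h : i < n then (π ⟨i, h⟩ : Fin n) else 0

/-- `π` has the largest letter `n` (encoded as `n-1`) at (1-based) position `r`,
and exactly `k` excedances. -/
def posExc (n r k : ℕ) (π : Equiv.Perm (Fin n)) : Prop :=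
  onel π (r - 1) = n - 1 ∧ excA π = k

instance (n r k : ℕ) : DecidablePred (posExc n r k) := by
  unfold posExc; infer_instance

theorem Finset.card_filter_eq_card_filter_not_of_involution {α : Type*} {s : Finset α}
    (p : α → Prop) [DecidablePred p] (f : α → α) (hf : ∀ x ∈ s, f (f x) = x)
    (hs : ∀ x ∈ s, f x ∈ s) (hp : ∀ x ∈ s, p (f x) ↔ ¬ p x) :
    #(s.filter p) = #(s.filter (fun x => ¬ p x)) := by
  apply card_nbij' f f
  · intro x hx
    rw [mem_coe, mem_filter] at hx ⊢
    exact ⟨hs x hx.1, fun h => (hp x hx.1).1 h hx.2⟩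
  · intro x hx
    rw [mem_coe, mem_filter] at hx ⊢
    exact ⟨hs x hx.1, (hp x hx.1).2 hx.2⟩
  · exact fun x hx => hf x (mem_filter.1 hx).1
  · exact fun x hx => hf x (mem_filter.1 hx).1

theorem Finset.two_mul_card_filter_eq_card_of_involution {α : Type*} {s : Finset α}
    (p : α → Prop) [DecidablePred p] (f : α → α) (hf : ∀ x ∈ s, f (f x) = x)
    (hs : ∀ x ∈ s, f x ∈ s) (hp : ∀ x ∈ s, p (f x) ↔ ¬ p x) :
    2 * #(s.filter p) = #s := by
  rw [← card_filter_add_card_filter_not (s := s) p,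
    ← card_filter_eq_card_filter_not_of_involution p f hf hs hp, two_mul]

namespace Equiv.Perm

theorem signAux_eq_sign {n : ℕ} (π : Perm (Fin n)) : signAux π = sign π := by
  induction π using swap_induction_on with
  | one => rw [signAux_one, sign_one]
  | swap_mul π x y hxy ih => rw [signAux_mul, sign_mul, ih, signAux_swap hxy, sign_swap hxy]

theorem sign_eq_neg_one_pow_invA_s3 {n : ℕ} (π : Perm (Fin n)) : sign π = (-1) ^ invA π := by
  rw [← signAux_eq_sign, signAux, invA,
    ← prod_filter_mul_prod_filter_not (finPairsLT n) (fun x => π x.1 ≤ π x.2),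
    prod_congr rfl (fun x hx => if_pos (mem_filter.1 hx).2),
    prod_congr rfl (fun x hx => if_neg (mem_filter.1 hx).2),
    prod_const, prod_const, one_pow, mul_one]
  congr 1
  -- a pair `j < i` with `π i ≤ π j` is the inversion `(j, i)`
  apply card_bij (fun x _ => (x.2, x.1))
  · intro x hx
    simp only [mem_filter, mem_finPairsLT, mem_univ, true_and] at hx ⊢
    exact ⟨hx.1, hx.2.lt_of_ne (π.injective.ne hx.1.ne')⟩
  · intro x _ y _ h
    simp only [Prod.mk.injEq] at h
    exact Sigma.ext h.2 (heq_of_eq h.1)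
  · intro p hp
    simp only [mem_filter, mem_univ, true_and] at hp
    exact ⟨⟨p.2, p.1⟩, mem_filter.2 ⟨mem_finPairsLT.2 hp.1, hp.2.le⟩, rfl⟩

theorem even_invA_iff_sign_eq_one {n : ℕ} (π : Perm (Fin n)) :
    Even (invA π) ↔ sign π = 1 := by
  rw [sign_eq_neg_one_pow_invA_s3, neg_one_pow_eq_one_iff_even (by decide)]

theorem even_invA_mul_swap_iff {n : ℕ} (π : Perm (Fin n)) {a b : Fin n} (hab : a ≠ b) :
    Even (invA (π * swap a b)) ↔ ¬ Even (invA π) := by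
  rw [even_invA_iff_sign_eq_one, even_invA_iff_sign_eq_one, sign_mul, sign_swap hab]
  rcases Int.units_eq_one_or (sign π) with h | h <;> simp [h]

theorem excA_mul_swap {n : ℕ} (π : Perm (Fin n)) {a b : Fin n} (hab : a ≤ b)
    (ha : π a ≤ a) (hb : π b ≤ a) : excA (π * swap a b) = excA π := by
  unfold excA
  congr 1
  refine filter_congr fun i _ => ?_
  rw [mul_apply]
  by_cases hia : i = a
  · subst hia
    rw [swap_apply_left]
    exact iff_of_false hb.not_gt ha.not_gt
  by_cases hib : i = b
  · subst hib
    rw [swap_apply_right]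
    exact iff_of_false (ha.trans hab).not_gt (hb.trans hab).not_gt
  rw [swap_apply_of_ne_of_ne hia hib]

theorem onel_mul_swap {n : ℕ} (π : Perm (Fin n)) {a b : Fin n} {i : ℕ}
    (ha : i ≠ a) (hb : i ≠ b) : onel (π * swap a b) i = onel π i := by
  unfold onel
  split_ifs with hi
  · rw [mul_apply, swap_apply_of_ne_of_ne (by simpa [Fin.ext_iff] using ha)
      (by simpa [Fin.ext_iff] using hb)]
  · rfl

theorem posExc_mul_swap {n r k : ℕ} (hr1 : 1 ≤ r) (hr2 : r ≤ n - 2) {a b : Fin n}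
    (ha : (a : ℕ) = n - 2) (hb : (b : ℕ) = n - 1) {π : Perm (Fin n)} (h : posExc n r k π) :
    posExc n r k (π * swap a b) := by
  obtain ⟨hpos, hexc⟩ := h
  have hr : r - 1 < n := by omega
  rw [onel, dif_pos hr] at hpos
  have hle : ∀ x : Fin n, (x : ℕ) ≠ r - 1 → π x ≤ a := by
    intro x hx
    have hne : (π x : ℕ) ≠ n - 1 := fun h =>
      hx (congrArg Fin.val (π.injective (Fin.ext (h.trans hpos.symm))))
    rw [Fin.le_iff_val_le_val]
    omega
  refine ⟨?_, ?_⟩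
  · rw [onel_mul_swap π (by omega) (by omega), onel, dif_pos hr, hpos]
  · rw [excA_mul_swap π (by rw [Fin.le_iff_val_le_val]; omega)
      (hle a (by omega)) (hle b (by omega)), hexc]

end Equiv.Perm

open Equiv Perm in
theorem stmt3_general (n r k : ℕ) (hr1 : 1 ≤ r) (hr2 : r ≤ n - 2) :
    (Finset.univ.filter
        (fun π : Equiv.Perm (Fin n) => posExc n r k π ∧ Even (invA π))).card =
      (Finset.univ.filter
        (fun π : Equiv.Perm (Fin n) => posExc n r k π ∧ ¬ Even (invA π))).card ∧
    2 * (Finset.univ.filter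
        (fun π : Equiv.Perm (Fin n) => posExc n r k π ∧ Even (invA π))).card =
      (Finset.univ.filter (fun π : Equiv.Perm (Fin n) => posExc n r k π)).card := by
  let a : Fin n := ⟨n - 2, by omega⟩
  let b : Fin n := ⟨n - 1, by omega⟩
  have hab : a ≠ b := by simp [a, b, Fin.ext_iff]; omega
  set s := univ.filter (posExc n r k)
  have hinv : ∀ π ∈ s, π * swap a b * swap a b = π := fun π _ => mul_swap_mul_self a b π
  have hmaps : ∀ π ∈ s, π * swap a b ∈ s := fun π hπ =>
    mem_filter.2 ⟨mem_univ _, posExc_mul_swap hr1 hr2 rfl rfl (mem_filter.1 hπ).2⟩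
  have hflip : ∀ π ∈ s, Even (invA (π * swap a b)) ↔ ¬ Even (invA π) :=
    fun π _ => even_invA_mul_swap_iff π hab
  have hcard := card_filter_eq_card_filter_not_of_involution (fun π => Even (invA π)) _
    hinv hmaps hflip
  have htwo := two_mul_card_filter_eq_card_of_involution (fun π => Even (invA π)) _
    hinv hmaps hflip
  simp only [s, filter_filter] at hcard htwo
  exact ⟨hcard, htwo⟩

theorem stmt3 (n r k : ℕ) (hn : 2 ≤ n) (hr1 : 1 ≤ r) (hr2 : r ≤ n - 2) :
    (Finset.univ.filter
        (fun π : Equiv.Perm (Fin n) => posExc n r k π ∧ Even (invA π))).card =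
      (Finset.univ.filter
        (fun π : Equiv.Perm (Fin n) => posExc n r k π ∧ ¬ Even (invA π))).card ∧
    2 * (Finset.univ.filter
        (fun π : Equiv.Perm (Fin n) => posExc n r k π ∧ Even (invA π))).card =
      (Finset.univ.filter (fun π : Equiv.Perm (Fin n) => posExc n r k π)).card :=
  stmt3_general n r k hr1 hr2
end

section
/- Let f(t) be a univariate gamma positive polynomial with center of symmetry n/2 whose length (degree minus order of vanishing at 0) is odd. Then f(t) = p_1(t) + p_2(t) where p_1, p_2 are gamma positive with centers of symmetry (n-1)/2 and (n+1)/2 respectively, and both p_1, p_2 have even length. -/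
open Finset Polynomial

/-- `f` is gamma positive with parameters `r ≤ N`: it has an expansion
`f = ∑ γ_i t^{r+i}(1+t)^{N-r-2i}` with `γ_i ≥ 0`; its center of symmetry is
`(N+r)/2` and its length is `N - r`. -/
def IsGammaPos (f : Polynomial ℚ) (r N : ℕ) : Prop :=
  r ≤ N ∧ ∃ γ : ℕ → ℚ, (∀ i, 0 ≤ γ i) ∧
    f = ∑ i ∈ Finset.range ((N - r) / 2 + 1),
      Polynomial.C (γ i) * Polynomial.X ^ (r + i) * (1 + Polynomial.X) ^ (N - r - 2 * i)

/-!
Proof idea: split each factor `(1+t)^{2m+1-2i}` of the gamma expansion of odd length `2m+1`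
as `(1+t)^{2m-2i} + t (1+t)^{2m-2i}`. The first halves form the gamma expansion of length `2m`
starting at `t^r`, the second halves that of length `2m` starting at `t^{r+1}`, both with the
original coefficients `γ_i`.
-/

noncomputable def gammaExpansion (γ : ℕ → ℚ) (r L : ℕ) : ℚ[X] :=
  ∑ i ∈ range (L / 2 + 1), C (γ i) * X ^ (r + i) * (1 + X) ^ (L - 2 * i)

theorem isGammaPos_gammaExpansion {γ : ℕ → ℚ} (hγ : ∀ i, 0 ≤ γ i) (r L : ℕ) :
    IsGammaPos (gammaExpansion γ r L) r (r + L) := by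
  refine ⟨Nat.le_add_right r L, γ, hγ, ?_⟩
  rw [Nat.add_sub_cancel_left]
  rfl

theorem gammaExpansion_odd (γ : ℕ → ℚ) (r m : ℕ) :
    gammaExpansion γ r (2 * m + 1) =
      gammaExpansion γ r (2 * m) + gammaExpansion γ (r + 1) (2 * m) := by
  have hrange : (2 * m + 1) / 2 = 2 * m / 2 := by omega
  rw [gammaExpansion, gammaExpansion, gammaExpansion, hrange, ← sum_add_distrib]
  refine sum_congr rfl fun i hi => ?_
  have hexp : 2 * m + 1 - 2 * i = 2 * m - 2 * i + 1 := by
    have := mem_range.mp hi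
    omega
  rw [hexp, pow_succ]
  ring

theorem stmt12 (n : ℕ) (f : Polynomial ℚ) (r N : ℕ)
    (hf : IsGammaPos f r N) (hcen : N + r = n) (hlen : Odd (N - r)) :
    ∃ (p₁ p₂ : Polynomial ℚ) (r₁ N₁ r₂ N₂ : ℕ),
      f = p₁ + p₂ ∧
      IsGammaPos p₁ r₁ N₁ ∧ N₁ + r₁ = n - 1 ∧ Even (N₁ - r₁) ∧
      IsGammaPos p₂ r₂ N₂ ∧ N₂ + r₂ = n + 1 ∧ Even (N₂ - r₂) := by
  obtain ⟨-, γ, hγ, hfeq⟩ := hf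
  obtain ⟨m, hm⟩ := hlen
  have hf' : f = gammaExpansion γ r (2 * m + 1) := by rw [hfeq, ← hm]; rfl
  refine ⟨gammaExpansion γ r (2 * m), gammaExpansion γ (r + 1) (2 * m), r, r + 2 * m, r + 1,
    r + 1 + 2 * m, hf'.trans (gammaExpansion_odd γ r m), isGammaPos_gammaExpansion hγ r (2 * m),
    by omega, ⟨m, by omega⟩, isGammaPos_gammaExpansion hγ (r + 1) (2 * m), by omega, ⟨m, by omega⟩⟩
end

section
/- For all positive integers n, ∑_{π ∈ B_n} (-1)^{inv_B(π)} t^{des_B(π)} s^{asc_B(π)} = (s-t)^n, where B_n is the hyperoctahedral group of signed permutations. -/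
open Finset MvPolynomial

/-- A signed permutation of `[n]`, encoded as a pair of an ordinary permutation and a
sign vector: the window entry at position `i` is `±(σ(i))`. -/
abbrev BPerm (n : ℕ) := Equiv.Perm (Fin n) × (Fin n → Bool)

/-- The window entry `π_i ∈ {±1,…,±n}` of a signed permutation, for `1 ≤ i ≤ n`;
we set `π_0 = 0` (and `0` outside the window). -/
def bval {n : ℕ} (w : BPerm n) (i : ℕ) : ℤ :=
  if h : 1 ≤ i ∧ i ≤ n then
    (if w.2 ⟨i - 1, by omega⟩ then -(((w.1 ⟨i - 1, by omega⟩ : Fin n) : ℕ) + 1 : ℤ)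
     else (((w.1 ⟨i - 1, by omega⟩ : Fin n) : ℕ) + 1 : ℤ))
  else 0

/-- Type-B descents: `des_B(π) = #{0 ≤ i ≤ n-1 : π_i > π_{i+1}}` (with `π_0 = 0`). -/
def desB {n : ℕ} (w : BPerm n) : ℕ :=
  ((Finset.range n).filter (fun i => bval w (i + 1) < bval w i)).card

/-- Type-B ascents: `asc_B(π) = #{0 ≤ i ≤ n-1 : π_i < π_{i+1}}` (with `π_0 = 0`). -/
def ascB {n : ℕ} (w : BPerm n) : ℕ :=
  ((Finset.range n).filter (fun i => bval w i < bval w (i + 1))).card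

/-- Type-B inversion number:
`inv_B(π) = #{1 ≤ i < j ≤ n : π_i > π_j} + ∑_{i : π_i < 0} |π_i|`. -/
def invB {n : ℕ} (w : BPerm n) : ℕ :=
  (((Finset.Icc 1 n) ×ˢ (Finset.Icc 1 n)).filter
      (fun p => p.1 < p.2 ∧ bval w p.2 < bval w p.1)).card +
    ∑ i ∈ (Finset.Icc 1 n).filter (fun i => bval w i < 0), (bval w i).natAbs

/-- Type-B excedances:
`exc_B(π) = #{i ∈ [n] : π_{|π(i)|} > π_i} + #{i ∈ [n] : π_i = -i}`. -/
def excB {n : ℕ} (w : BPerm n) : ℕ :=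
  ((Finset.Icc 1 n).filter (fun i => bval w i < bval w ((bval w i).natAbs))).card +
    ((Finset.Icc 1 n).filter (fun i => bval w i = -(i : ℤ))).card

/-- Type-B non-excedances. -/
def nexcB {n : ℕ} (w : BPerm n) : ℕ := n - excB w

/-!
If `σ ≠ 1`, let `k` be the first position at which `|π|` drops, `|π_k| > |π_{k+1}|`. Since
`π_0 = 0`, `k` is a peak of `|π|`, so `π_k` is a peak or a valley of `π` whatever its sign, and
changing the sign of `π_k` changes neither `des_B` nor `asc_B = n - des_B`. Changing the sign of
an entry of absolute value `a` changes `inv_B`, modulo 2, by `a` plus the number of entries of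
smaller absolute value, i.e. by `a + (a - 1)`. Hence the signed permutations with underlying
permutation `σ ≠ 1` cancel in pairs. For `σ = 1` with negative entries at the positions `S`,
`des_B = |S|` and `inv_B ≡ |S|`, and `∑_S (-t)^|S| s^(n-|S|) = (s - t)^n`.
-/

lemma Equiv.Perm.eq_one_of_monotone {α : Type*} [LinearOrder α] [WellFoundedLT α]
    {σ : Equiv.Perm α} (h : Monotone σ) : σ = 1 := by
  have := Subsingleton.elim ((h.strictMono_of_injective σ.injective).orderIsoOfSurjective σ
    σ.surjective) (OrderIso.refl α)
  ext x
  simpa using congrArg (fun e : α ≃o α => e x) this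

lemma Finset.sum_range_congr_off_pair {M : Type*} [AddCommMonoid M] {f g : ℕ → M} {n m : ℕ}
    (hm : m + 1 < n) (hfg : ∀ i, i ≠ m → i ≠ m + 1 → f i = g i)
    (hpair : f m + f (m + 1) = g m + g (m + 1)) :
    ∑ i ∈ range n, f i = ∑ i ∈ range n, g i := by
  have hmem : m + 1 ∈ (range n).erase m := mem_erase.2 ⟨by omega, mem_range.2 hm⟩
  rw [← add_sum_erase _ _ (mem_range.2 (by omega : m < n)), ← add_sum_erase _ _ hmem,
    ← add_sum_erase _ g (mem_range.2 (by omega : m < n)), ← add_sum_erase _ g hmem,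
    ← add_assoc, ← add_assoc, hpair]
  congr 1
  refine sum_congr rfl fun i hi => ?_
  simp only [mem_erase] at hi
  exact hfg i hi.2.1 hi.1

lemma sum_Icc_one_eq_sum_fin {M : Type*} [AddCommMonoid M] (n : ℕ) (f : ℕ → M) :
    ∑ i ∈ Icc 1 n, f i = ∑ p : Fin n, f (p + 1) := by
  rw [← Ico_add_one_right_eq_Icc, sum_Ico_eq_sum_range, ← Fin.sum_univ_eq_sum_range]
  exact sum_congr rfl fun p _ => by rw [add_comm]

lemma Int.lt_iff_neg_of_natAbs_lt {a x : ℤ} (h : a.natAbs < x.natAbs) : x < a ↔ x < 0 := by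
  omega

lemma Int.lt_iff_pos_of_natAbs_lt {b x : ℤ} (h : b.natAbs < x.natAbs) : b < x ↔ 0 < x := by
  omega

lemma Int.ite_lt_add_ite_lt_eq_one {a x b : ℤ} (ha : a.natAbs < x.natAbs)
    (hb : b.natAbs < x.natAbs) :
    (if x < a then 1 else 0) + (if b < x then 1 else 0) = 1 := by
  rw [if_congr (Int.lt_iff_neg_of_natAbs_lt ha) rfl rfl,
    if_congr (Int.lt_iff_pos_of_natAbs_lt hb) rfl rfl]
  split_ifs <;> omega

lemma Int.ite_lt_add_ite_lt_neg {a b : ℤ} (h : a.natAbs ≠ b.natAbs) :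
    (if b < a then 1 else 0 : ZMod 2) + (if b < -a then 1 else 0) =
      if b.natAbs < a.natAbs then 1 else 0 := by
  split_ifs <;> first | omega | decide

lemma Int.ite_lt_add_ite_neg_lt {a b : ℤ} (h : a.natAbs ≠ b.natAbs) :
    (if a < b then 1 else 0 : ZMod 2) + (if -a < b then 1 else 0) =
      if b.natAbs < a.natAbs then 1 else 0 := by
  split_ifs <;> first | omega | decide

section SignedPermutation

variable {n : ℕ}

/-- Changes the sign of `π_{p+1}` (`Fin n` indexes the window from `0`). -/
def flipSign (w : BPerm n) (p : Fin n) : BPerm n := (w.1, Function.update w.2 p (!w.2 p))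

lemma bval_zero (w : BPerm n) : bval w 0 = 0 := dif_neg (by omega)

lemma bval_succ (w : BPerm n) (p : Fin n) :
    bval w (p + 1) = if w.2 p then -((w.1 p : ℕ) + 1 : ℤ) else ((w.1 p : ℕ) + 1 : ℤ) := by
  rw [bval, dif_pos (by omega)]
  rfl

lemma natAbs_bval_succ (w : BPerm n) (p : Fin n) : (bval w (p + 1)).natAbs = w.1 p + 1 := by
  rw [bval_succ]
  split <;> omega

lemma bval_succ_neg_iff (w : BPerm n) (p : Fin n) : bval w (p + 1) < 0 ↔ w.2 p = true := by
  rw [bval_succ]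
  split <;> simp_all <;> omega

lemma natAbs_bval_eq_of_fst_eq {w w' : BPerm n} (h : w.1 = w'.1) (i : ℕ) :
    (bval w i).natAbs = (bval w' i).natAbs := by
  unfold bval
  split_ifs <;> simp [h] <;> omega

lemma bval_flipSign_succ_self (w : BPerm n) (p : Fin n) :
    bval (flipSign w p) (p + 1) = -bval w (p + 1) := by
  rw [bval_succ, bval_succ]
  cases h : w.2 p <;> simp [flipSign, h]

lemma bval_flipSign_of_ne (w : BPerm n) (p : Fin n) {i : ℕ} (hi : i ≠ p + 1) :
    bval (flipSign w p) i = bval w i := by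
  by_cases h : 1 ≤ i ∧ i ≤ n
  · have hne : (⟨i - 1, by omega⟩ : Fin n) ≠ p := fun e => hi (by
      have := congrArg Fin.val e; simp only at this; omega)
    simp only [bval, dif_pos h, flipSign, Function.update_of_ne hne]
  · simp only [bval, dif_neg h]

lemma natAbs_bval_ne_natAbs_bval_succ (w : BPerm n) {i : ℕ} (hi : i < n) :
    (bval w i).natAbs ≠ (bval w (i + 1)).natAbs := by
  rw [show (bval w (i + 1)).natAbs = w.1 ⟨i, hi⟩ + 1 from natAbs_bval_succ w ⟨i, hi⟩]
  rcases i with _ | j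
  · simp [bval_zero]
  · rw [show (bval w (j + 1)).natAbs = w.1 ⟨j, by omega⟩ + 1 from
      natAbs_bval_succ w ⟨j, by omega⟩]
    intro h
    have := w.1.injective (Fin.ext (by omega : (w.1 ⟨j, _⟩ : ℕ) = w.1 ⟨j + 1, hi⟩))
    simp at this

lemma desB_add_ascB (w : BPerm n) : desB w + ascB w = n := by
  conv_rhs => rw [← card_range n, ← card_filter_add_card_filter_not (s := range n)
    (fun i => bval w (i + 1) < bval w i)]
  rw [desB, ascB]
  congr 2
  refine filter_congr fun i hi => ?_
  have := natAbs_bval_ne_natAbs_bval_succ w (mem_range.1 hi)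
  omega

lemma ascB_eq (w : BPerm n) : ascB w = n - desB w := by
  have := desB_add_ascB w
  omega

lemma desB_flipSign (w : BPerm n) (p : Fin n) (hp : (p : ℕ) + 1 < n)
    (hl : (bval w p).natAbs < (bval w (p + 1)).natAbs)
    (hr : (bval w (p + 2)).natAbs < (bval w (p + 1)).natAbs) :
    desB (flipSign w p) = desB w := by
  simp only [desB, card_filter]
  refine sum_range_congr_off_pair hp (fun i h1 h2 => ?_) ?_
  · rw [bval_flipSign_of_ne w p h2, bval_flipSign_of_ne w p (i := i + 1) (by omega)]
  · rw [show (p : ℕ) + 1 + 1 = p + 2 from rfl, bval_flipSign_of_ne w p (i := p) (by omega),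
      bval_flipSign_of_ne w p (i := p + 2) (by omega), bval_flipSign_succ_self,
      Int.ite_lt_add_ite_lt_eq_one hl hr,
      Int.ite_lt_add_ite_lt_eq_one (by rwa [Int.natAbs_neg]) (by rwa [Int.natAbs_neg])]

lemma exists_peak (w : BPerm n) (hw : w.1 ≠ 1) :
    ∃ p : Fin n, (p : ℕ) + 1 < n ∧ (bval w p).natAbs < (bval w (p + 1)).natAbs ∧
      (bval w (p + 2)).natAbs < (bval w (p + 1)).natAbs := by
  have hdrop : ∃ i, i + 1 < n ∧ (bval w (i + 2)).natAbs < (bval w (i + 1)).natAbs := by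
    by_contra! h
    refine hw (Equiv.Perm.eq_one_of_monotone ?_)
    cases n with
    | zero => exact fun a => a.elim0
    | succ m =>
      refine Fin.monotone_iff_le_succ.2 fun i => Fin.le_def.2 ?_
      have h1 : (bval w (i + 1)).natAbs = w.1 i.castSucc + 1 := natAbs_bval_succ w i.castSucc
      have h2 : (bval w (i + 2)).natAbs = w.1 i.succ + 1 := natAbs_bval_succ w i.succ
      have := h i (by omega)
      omega
  -- the first drop of `|π|` is a peak
  obtain ⟨hi, hdrop_i⟩ := Nat.find_spec hdrop
  have hmin : ∀ j < Nat.find hdrop, ¬(j + 1 < n ∧ _) := fun j hj => Nat.find_min hdrop hj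
  generalize Nat.find hdrop = i at hi hdrop_i hmin
  refine ⟨⟨i, by omega⟩, hi, ?_, hdrop_i⟩
  show (bval w i).natAbs < (bval w (i + 1)).natAbs
  have hne := natAbs_bval_ne_natAbs_bval_succ w (i := i) (by omega)
  rcases i with _ | j
  · rw [bval_zero] at hne ⊢
    omega
  · have := hmin j (by omega)
    rw [show j + 1 + 1 = j + 2 from rfl] at hne ⊢
    omega

end SignedPermutation

lemma Equiv.Perm.card_filter_apply_lt {n : ℕ} (σ : Equiv.Perm (Fin n)) (x : Fin n) :
    #{q | σ q < x} = x := by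
  rw [← Fin.card_Iio x, ← card_map σ.toEmbedding]
  congr 1
  ext u
  simp

section Inversions

variable {n : ℕ}

lemma invB_eq (w : BPerm n) :
    invB w = ∑ i : Fin n, ∑ j : Fin n,
        (if i < j ∧ bval w (j + 1) < bval w (i + 1) then 1 else 0) +
      ∑ i : Fin n, if w.2 i = true then (w.1 i : ℕ) + 1 else 0 := by
  rw [invB, card_filter, sum_product, sum_filter]
  simp only [sum_Icc_one_eq_sum_fin, bval_succ_neg_iff, natAbs_bval_succ, Fin.lt_def,
    add_lt_add_iff_right]

lemma bval_flipSign_succ_of_ne (w : BPerm n) {p k : Fin n} (hk : k ≠ p) :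
    bval (flipSign w p) (k + 1) = bval w (k + 1) :=
  bval_flipSign_of_ne w p fun h => hk (Fin.ext (by omega))

lemma inversion_add_inversion_flipSign (w : BPerm n) (p i j : Fin n) :
    (if i < j ∧ bval w (j + 1) < bval w (i + 1) then 1 else 0 : ZMod 2) +
        (if i < j ∧ bval (flipSign w p) (j + 1) < bval (flipSign w p) (i + 1) then 1 else 0) =
      (if i = p ∧ p < j ∧ w.1 j < w.1 p then 1 else 0) +
        (if j = p ∧ i < p ∧ w.1 i < w.1 p then 1 else 0) := by
  have habs (k : Fin n) :
      (bval w (k + 1)).natAbs < (bval w (p + 1)).natAbs ↔ w.1 k < w.1 p := by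
    rw [natAbs_bval_succ, natAbs_bval_succ, Fin.lt_def]
    omega
  have hne {k : Fin n} (hk : k ≠ p) : (bval w (p + 1)).natAbs ≠ (bval w (k + 1)).natAbs := by
    rw [natAbs_bval_succ, natAbs_bval_succ]
    exact fun h => hk (w.1.injective (Fin.ext (by omega)))
  by_cases hi : i = p <;> by_cases hj : j = p
  · subst hi hj
    simp
  · subst hi
    rw [bval_flipSign_succ_of_ne w hj, bval_flipSign_succ_self]
    by_cases hij : i < j
    · simp only [hij, true_and, hj, false_and, if_false, add_zero]
      rw [Int.ite_lt_add_ite_lt_neg (hne hj), if_congr (habs j) rfl rfl]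
    · simp [hij]
  · subst hj
    rw [bval_flipSign_succ_of_ne w hi, bval_flipSign_succ_self]
    by_cases hij : i < j
    · simp only [hij, true_and, hi, false_and, if_false, zero_add]
      rw [Int.ite_lt_add_ite_neg_lt (hne hi), if_congr (habs i) rfl rfl]
    · simp [hij]
  · rw [bval_flipSign_succ_of_ne w hi, bval_flipSign_succ_of_ne w hj, CharTwo.add_self_eq_zero]
    simp [hi, hj]

lemma sum_sum_inversion_change (σ : Equiv.Perm (Fin n)) (p : Fin n) :
    ∑ i : Fin n, ∑ j : Fin n, ((if i = p ∧ p < j ∧ σ j < σ p then 1 else 0 : ZMod 2) +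
        (if j = p ∧ i < p ∧ σ i < σ p then 1 else 0)) = ((σ p : ℕ) : ZMod 2) := by
  simp only [sum_add_distrib, ite_and, sum_ite_eq', mem_univ, if_true]
  rw [sum_comm]
  simp only [sum_ite_eq', mem_univ, if_true, ← sum_add_distrib]
  rw [← σ.card_filter_apply_lt (σ p), card_filter, Nat.cast_sum]
  refine sum_congr rfl fun q _ => ?_
  rcases lt_trichotomy p q with h | rfl | h
  · simp [h, h.not_gt]
  · simp
  · simp [h, h.not_gt]

lemma cast_invB_add_invB_flipSign (w : BPerm n) (p : Fin n) :
    ((invB w + invB (flipSign w p) : ℕ) : ZMod 2) = 1 := by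
  have hneg (i : Fin n) :
      (if w.2 i = true then ((w.1 i : ℕ) : ZMod 2) + 1 else 0) +
        (if (flipSign w p).2 i = true then (((flipSign w p).1 i : ℕ) : ZMod 2) + 1 else 0) =
      if i = p then ((w.1 p : ℕ) : ZMod 2) + 1 else 0 := by
    by_cases hi : i = p
    · subst hi
      cases h : w.2 i <;> simp [flipSign, h]
    · simp [flipSign, hi, CharTwo.add_self_eq_zero]
  push_cast [invB_eq]
  calc _ = ∑ i : Fin n, ∑ j : Fin n,
          ((if i < j ∧ bval w (j + 1) < bval w (i + 1) then 1 else 0 : ZMod 2) +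
            (if i < j ∧ bval (flipSign w p) (j + 1) < bval (flipSign w p) (i + 1)
              then 1 else 0)) +
        ∑ i : Fin n, ((if w.2 i = true then ((w.1 i : ℕ) : ZMod 2) + 1 else 0) +
          (if (flipSign w p).2 i = true then (((flipSign w p).1 i : ℕ) : ZMod 2) + 1
            else 0)) := by
        simp only [sum_add_distrib]
        ring
    _ = ((w.1 p : ℕ) : ZMod 2) + (((w.1 p : ℕ) : ZMod 2) + 1) := by
        simp only [inversion_add_inversion_flipSign, sum_sum_inversion_change, hneg, sum_ite_eq',
          mem_univ, if_true]
    _ = 1 := by rw [← add_assoc, CharTwo.add_self_eq_zero, zero_add]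

end Inversions

section Cancellation

variable {n : ℕ} {R : Type*}

lemma neg_one_pow_invB_flipSign [Monoid R] [HasDistribNeg R] (w : BPerm n) (p : Fin n) :
    (-1 : R) ^ invB (flipSign w p) = -(-1) ^ invB w := by
  have h := ZMod.natCast_eq_one_iff_odd.1 (cast_invB_add_invB_flipSign w p)
  rcases Nat.even_or_odd (invB w) with ha | ha
  · rw [ha.neg_one_pow, ((Nat.odd_add'.1 h).2 ha).neg_one_pow]
  · rw [ha.neg_one_pow, ((Nat.odd_add.1 h).1 ha).neg_one_pow, neg_neg]

def ofFinset (σ : Equiv.Perm (Fin n)) (S : Finset (Fin n)) : BPerm n :=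
  (σ, fun i => decide (i ∈ S))

lemma neg_one_pow_invB_ofFinset [Monoid R] [HasDistribNeg R] (σ : Equiv.Perm (Fin n))
    (S : Finset (Fin n)) :
    (-1 : R) ^ invB (ofFinset σ S) = (-1) ^ invB (ofFinset σ ∅) * (-1) ^ #S := by
  induction S using Finset.induction_on with
  | empty => simp
  | insert a S ha ih =>
    have hflip : ofFinset σ (insert a S) = flipSign (ofFinset σ S) a := by
      refine Prod.ext rfl (funext fun i => ?_)
      by_cases hi : i = a
      · subst hi
        simp [ofFinset, flipSign, ha]
      · simp [ofFinset, flipSign, hi]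
    rw [hflip, neg_one_pow_invB_flipSign, ih, card_insert_of_notMem ha, pow_succ, mul_neg_one,
      mul_neg]

lemma invB_ofFinset_one_empty : invB (ofFinset (1 : Equiv.Perm (Fin n)) ∅) = 0 := by
  rw [invB_eq]
  simpa [ofFinset, bval_succ] using fun i j h => h.le

lemma desB_ofFinset_one (S : Finset (Fin n)) : desB (ofFinset 1 S) = #S := by
  rw [desB, card_filter, ← Fin.sum_univ_eq_sum_range
    (fun i => if bval (ofFinset 1 S) (i + 1) < bval (ofFinset 1 S) i then 1 else 0)]
  conv_rhs => rw [← filter_univ_mem S, card_filter]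
  refine sum_congr rfl fun p _ => if_congr ?_ rfl rfl
  rw [Int.lt_iff_neg_of_natAbs_lt, bval_succ_neg_iff, ofFinset, decide_eq_true_iff]
  rw [natAbs_bval_succ]
  rcases p with ⟨_ | j, hj⟩
  · simp [bval_zero]
  · rw [show (bval (ofFinset 1 S) (j + 1)).natAbs = _ from natAbs_bval_succ _ ⟨j, by omega⟩]
    simp [ofFinset]

lemma sum_fiber_eq_zero_of_ne_one [CommRing R] (s t : R) {σ : Equiv.Perm (Fin n)}
    (hσ : σ ≠ 1) :
    ∑ ε : Fin n → Bool, (-1) ^ invB ((σ, ε) : BPerm n) * t ^ desB ((σ, ε) : BPerm n) *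
      s ^ ascB ((σ, ε) : BPerm n) = 0 := by
  obtain ⟨p, hp, hl, hr⟩ := exists_peak ((σ, fun _ => false) : BPerm n) hσ
  have hdes (ε : Fin n → Bool) : desB (flipSign (σ, ε) p) = desB ((σ, ε) : BPerm n) := by
    simp only [natAbs_bval_eq_of_fst_eq (w := (σ, fun _ => false)) (w' := (σ, ε)) rfl] at hl hr
    exact desB_flipSign _ p hp hl hr
  refine sum_ninvolution (fun ε => (flipSign (σ, ε) p).2) (fun ε => ?_) (fun ε _ => ?_)
    (fun _ => mem_univ _) (fun ε => ?_)
  · change _ + (-1) ^ invB (flipSign (σ, ε) p) * t ^ desB (flipSign (σ, ε) p) *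
      s ^ ascB (flipSign (σ, ε) p) = 0
    rw [ascB_eq, ascB_eq, hdes, neg_one_pow_invB_flipSign]
    ring
  · exact fun h => by simpa [flipSign] using congrFun h p
  · simp [flipSign]

lemma Finset.bijective_decide_mem {α : Type*} [DecidableEq α] [Fintype α] :
    Function.Bijective fun (S : Finset α) (a : α) => decide (a ∈ S) :=
  ⟨fun S T h => Finset.ext fun a => by simpa using congrFun h a,
    fun ε => ⟨({a | ε a = true} : Finset α), funext fun a => by simp⟩⟩

theorem sum_neg_one_pow_invB_mul_pow_desB_mul_pow_ascB [CommRing R] (s t : R) (n : ℕ) :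
    ∑ w : BPerm n, (-1) ^ invB w * t ^ desB w * s ^ ascB w = (s - t) ^ n := by
  rw [Fintype.sum_prod_type,
    Fintype.sum_eq_single 1 fun _ hσ => sum_fiber_eq_zero_of_ne_one s t hσ]
  calc _ = ∑ S : Finset (Fin n),
          (-1) ^ invB (ofFinset 1 S) * t ^ desB (ofFinset 1 S) * s ^ ascB (ofFinset 1 S) :=
        (Fintype.sum_bijective _ Finset.bijective_decide_mem _ _ fun _ => rfl).symm
    _ = ∑ S : Finset (Fin n), (-t) ^ #S * s ^ (n - #S) := sum_congr rfl fun S _ => by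
        rw [ascB_eq, desB_ofFinset_one, neg_one_pow_invB_ofFinset, invB_ofFinset_one_empty,
          pow_zero, one_mul]
        ring
    _ = (s - t) ^ n := by rw [Fin.sum_pow_mul_eq_add_pow, neg_add_eq_sub]

end Cancellation

theorem stmt13_general (n : ℕ) :
    (∑ w : BPerm n, MvPolynomial.C ((-1 : ℚ) ^ invB w) *
        (MvPolynomial.X 1 : MvPolynomial (Fin 2) ℚ) ^ desB w *
        (MvPolynomial.X 0) ^ ascB w)
    = (MvPolynomial.X 0 - MvPolynomial.X 1 : MvPolynomial (Fin 2) ℚ) ^ n := by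
  simpa only [map_pow, map_neg, map_one] using
    sum_neg_one_pow_invB_mul_pow_desB_mul_pow_ascB (X 0 : MvPolynomial (Fin 2) ℚ) (X 1) n

theorem stmt13 (n : ℕ) (hn : 1 ≤ n) :
    (∑ w : BPerm n, MvPolynomial.C ((-1 : ℚ) ^ invB w) *
        (MvPolynomial.X 1 : MvPolynomial (Fin 2) ℚ) ^ desB w *
        (MvPolynomial.X 0) ^ ascB w)
    = (MvPolynomial.X 0 - MvPolynomial.X 1 : MvPolynomial (Fin 2) ℚ) ^ n :=
  stmt13_general n
end

section
/- For all n ≥ 2, the excedance polynomial over n-cycles satisfies ∑_{π ∈ S_n, π an n-cycle} t^{exc(π)} = t·A_{n-1}(t), where A_{n-1}(t) is the Eulerian polynomial ∑_{σ ∈ S_{n-1}} t^{des(σ)}. -/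
open Finset Polynomial

/-- Number of descents of a permutation in one-line notation. -/
def desA {n : ℕ} (π : Equiv.Perm (Fin n)) : ℕ :=
  ((Finset.range (n - 1)).filter (fun i => onel π (i + 1) < onel π i)).card

/-- The Eulerian polynomial `A_m(t) = ∑_{σ ∈ S_m} t^{des σ}`. -/
noncomputable def Euler (m : ℕ) : Polynomial ℚ :=
  ∑ σ : Equiv.Perm (Fin m), (Polynomial.X : Polynomial ℚ) ^ desA σ

/-!
An `(m+2)`-cycle `π` is determined by the word `(g 0, g 1, …, g (m+1))` listing its orbit from
`g 0 = m+1`, i.e. by the `g` with `π = g * finRotate * g⁻¹` and `g 0 = last`. Reindexing by `g`,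
the excedances of `π` are the cyclic ascents `g k < g (k+1)` of this word: the step out of `m+1`
is never one, the step back into `m+1` always is. Writing `g (i+1) = m - σ i` for `σ ∈ S_{m+1}`
turns the remaining ascents into descents of `σ`, so `exc π = des σ + 1`.
-/

open Equiv Equiv.Perm

theorem excA_conj {n : ℕ} (g f : Perm (Fin n)) :
    excA (g * f * g⁻¹) = #{k | g k < g (f k)} := by
  unfold excA
  refine (card_equiv g fun k => ?_).symm
  rw [Finset.mem_filter, Finset.mem_filter]
  simp [Perm.mul_apply]

theorem exists_finRotate_pow_apply_zero_eq {m : ℕ} (x : Fin (m + 2)) :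
    ∃ k : ℕ, (finRotate (m + 2) ^ k) 0 = x :=
  isCycle_finRotate.exists_pow_eq (by simp) (by simp)

theorem eq_of_conj_finRotate_eq {m : ℕ} {g h : Perm (Fin (m + 2))} (h0 : g 0 = h 0)
    (hc : g * finRotate _ * g⁻¹ = h * finRotate _ * h⁻¹) : g = h := by
  ext1 x
  obtain ⟨k, rfl⟩ := exists_finRotate_pow_apply_zero_eq x
  have key : ∀ c : Perm (Fin (m + 2)),
      c ((finRotate (m + 2) ^ k) 0) = ((c * finRotate (m + 2) * c⁻¹) ^ k) (c 0) := by
    intro c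
    simp [conj_pow, Perm.mul_apply]
  rw [key g, key h, hc, h0]

theorem exists_conj_finRotate_eq {m : ℕ} {π : Perm (Fin (m + 2))} (hπ : π.cycleType = {m + 2})
    (x : Fin (m + 2)) : ∃ g : Perm (Fin (m + 2)), g * finRotate _ * g⁻¹ = π ∧ g 0 = x := by
  obtain ⟨c, hc⟩ := isConj_iff.mp (isConj_iff_cycleType_eq.mpr (hπ ▸ cycleType_finRotate))
  obtain ⟨k, hk⟩ := exists_finRotate_pow_apply_zero_eq (c⁻¹ x)
  refine ⟨c * finRotate _ ^ k, ?_, by simp [Perm.mul_apply, hk]⟩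
  rw [← hc]
  group

theorem finRotate_castSucc {n : ℕ} (i : Fin n) : finRotate (n + 1) i.castSucc = i.succ := by
  ext
  simp

theorem desA_eq_sum {m : ℕ} (σ : Perm (Fin (m + 1))) :
    desA σ = ∑ j : Fin m, if σ j.succ < σ j.castSucc then 1 else 0 := by
  rw [desA, card_filter, Nat.add_sub_cancel, ← Fin.sum_univ_eq_sum_range]
  refine Finset.sum_congr rfl fun j _ => ?_
  simp only [onel, dif_pos (by omega : (j : ℕ) < m + 1), dif_pos (by omega : (j : ℕ) + 1 < m + 1)]
  rfl

-- `cycleListing σ = (m+1, rev (σ 0), …, rev (σ m))` in one-line notation.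
def cycleListing {m : ℕ} (σ : Perm (Fin (m + 1))) : Perm (Fin (m + 2)) :=
  Fin.revPerm * decomposeFin.symm (0, σ)

@[simp] theorem cycleListing_zero {m : ℕ} (σ : Perm (Fin (m + 1))) :
    cycleListing σ 0 = Fin.last (m + 1) := by
  simp [cycleListing, Perm.mul_apply]

@[simp] theorem cycleListing_succ {m : ℕ} (σ : Perm (Fin (m + 1))) (i : Fin (m + 1)) :
    cycleListing σ i.succ = (σ i).rev.castSucc := by
  simp [cycleListing, Perm.mul_apply, Fin.rev_succ]

theorem cycleListing_injective {m : ℕ} : Function.Injective (cycleListing (m := m)) := by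
  intro σ τ h
  ext1 i
  simpa using congr($h i.succ)

theorem exists_cycleListing_eq {m : ℕ} {g : Perm (Fin (m + 2))} (hg : g 0 = Fin.last (m + 1)) :
    ∃ σ, cycleListing σ = g := by
  set p := decomposeFin (Fin.revPerm * g)
  have hp : p = (0, p.2) := by
    refine Prod.ext ?_ rfl
    simpa [p, Perm.mul_apply, hg] using (decomposeFin_symm_apply_zero p.1 p.2).symm
  refine ⟨p.2, ?_⟩
  ext1 x
  simp [cycleListing, ← hp, p, Perm.mul_apply]

theorem card_cyclicAscents_cycleListing {m : ℕ} (σ : Perm (Fin (m + 1))) :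
    #{k | cycleListing σ k < cycleListing σ (finRotate _ k)} = desA σ + 1 := by
  rw [card_filter, Fin.sum_univ_succ, Fin.sum_univ_castSucc, desA_eq_sum]
  simp only [cycleListing_succ]
  simp only [Fin.succ_castSucc, finRotate_castSucc, Fin.succ_last, finRotate_last,
    cycleListing_zero, cycleListing_succ, Fin.castSucc_lt_castSucc_iff, Fin.rev_lt_rev,
    Fin.castSucc_lt_last, if_true, if_neg (Fin.le_last _).not_gt, zero_add]

def cycleOfListing {m : ℕ} (σ : Perm (Fin (m + 1))) : Perm (Fin (m + 2)) :=
  cycleListing σ * finRotate (m + 2) * (cycleListing σ)⁻¹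

theorem cycleType_cycleOfListing {m : ℕ} (σ : Perm (Fin (m + 1))) :
    (cycleOfListing σ).cycleType = {m + 2} :=
  cycleType_conj.trans cycleType_finRotate

theorem excA_cycleOfListing {m : ℕ} (σ : Perm (Fin (m + 1))) :
    excA (cycleOfListing σ) = desA σ + 1 :=
  (excA_conj _ _).trans (card_cyclicAscents_cycleListing σ)

theorem cycleOfListing_injective {m : ℕ} : Function.Injective (cycleOfListing (m := m)) :=
  fun _ _ h => cycleListing_injective (eq_of_conj_finRotate_eq (by simp) h)

theorem exists_cycleOfListing_eq {m : ℕ} {π : Perm (Fin (m + 2))} (hπ : π.cycleType = {m + 2}) :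
    ∃ σ, cycleOfListing σ = π := by
  obtain ⟨g, rfl, hg⟩ := exists_conj_finRotate_eq hπ (Fin.last (m + 1))
  obtain ⟨σ, rfl⟩ := exists_cycleListing_eq hg
  exact ⟨σ, rfl⟩

theorem stmt17 (n : ℕ) (hn : 2 ≤ n) :
    (∑ π ∈ Finset.univ.filter
        (fun π : Equiv.Perm (Fin n) => π.cycleType = {n}),
      (Polynomial.X : Polynomial ℚ) ^ excA π)
    = Polynomial.X * Euler (n - 1) := by
  obtain ⟨m, rfl⟩ : ∃ m, n = m + 2 := ⟨n - 2, by omega⟩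
  rw [Euler, Finset.mul_sum]
  refine (Finset.sum_bij (fun σ _ => cycleOfListing σ)
    (fun σ _ => by simp [cycleType_cycleOfListing]) (fun _ _ _ _ h => cycleOfListing_injective h)
    (fun π hπ => ?_) (fun σ _ => ?_)).symm
  · obtain ⟨σ, rfl⟩ := exists_cycleOfListing_eq (Finset.mem_filter.mp hπ).2
    exact ⟨σ, mem_univ σ, rfl⟩
  · rw [excA_cycleOfListing, pow_succ']
end
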